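/- (Behavior-policy performance guarantee.) Under the hypotheses of the sub-optimality theorem, if the behavior policy π_β satisfies E_{(s,a)∼d^{π_β}_{P̂}}[Ĉ(s,a)] ≤ η, then the learned policy π̂ = argmax_π V^π_{M̃} satisfies V^{π̂}_{M*} ≥ V^{π_β}_{M*} − (4γ·R_max/(1−γ)²)·η − (4γ·R_max/(1−γ)²)·ε. -/

import Mathlib

open Finset

section MDPDefs

variable {S A : Type*} [Fintype S] [Fintype A] [DecidableEq S]

/-- A function is a probability mass function on a finite type. -/
def IsPMF {X : Type*} [Fintype X] (p : X → ℝ) : Prop :=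
  (∀ x, 0 ≤ p x) ∧ ∑ x, p x = 1

/-- Total variation distance between two distributions on a finite type,
given by the half `ℓ¹` formula. -/
noncomputable def tv {X : Type*} [Fintype X] (p q : X → ℝ) : ℝ :=
  (1 / 2) * ∑ x, |p x - q x|

/-- One-step pushforward of a state-action distribution under policy `π` and
transition kernel `P`. -/
noncomputable def stepSA (π : S → A → ℝ) (P : S → A → S → ℝ)
    (μ : S × A → ℝ) : S × A → ℝ :=
  fun sa => ∑ s : S, ∑ a : A, μ (s, a) * P s a sa.1 * π sa.1 sa.2

/-- Distribution over state-action pairs at time `t`, starting from initial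
state distribution `μ₀`, following policy `π` in kernel `P`. -/
noncomputable def occ (π : S → A → ℝ) (P : S → A → S → ℝ) (μ₀ : S → ℝ) :
    ℕ → S × A → ℝ
  | 0 => fun sa => μ₀ sa.1 * π sa.1 sa.2
  | (t + 1) => stepSA π P (occ π P μ₀ t)

/-- Value function `V^π_{P,r}(s) = E_{π,P}[∑_t γ^t r(s_t,a_t) | s₀ = s]`. -/
noncomputable def valueFn (π : S → A → ℝ) (P : S → A → S → ℝ) (r : S → A → ℝ)
    (γ : ℝ) (s : S) : ℝ :=
  ∑' t : ℕ, γ ^ t *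
    ∑ sa : S × A, occ π P (fun s' => if s' = s then (1 : ℝ) else 0) t sa * r sa.1 sa.2

/-- Expected return `V^π_M = E_{s ∼ d₀}[V^π_{P,r}(s)]`. -/
noncomputable def expReturn (π : S → A → ℝ) (P : S → A → S → ℝ) (r : S → A → ℝ)
    (γ : ℝ) (d₀ : S → ℝ) : ℝ :=
  ∑ s : S, d₀ s * valueFn π P r γ s

/-- Normalized discounted state-action visitation distribution
`d^π_P(s,a) = (1-γ) ∑_t γ^t Pr[s_t = s, a_t = a]`. -/
noncomputable def visit (π : S → A → ℝ) (P : S → A → S → ℝ) (d₀ : S → ℝ)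
    (γ : ℝ) : S × A → ℝ :=
  fun sa => (1 - γ) * ∑' t : ℕ, γ ^ t * occ π P d₀ t sa

end MDPDefs

section Aux

variable {S A : Type*} [Fintype S] [Fintype A] [DecidableEq S]
variable {π : S → A → ℝ} {P Q : S → A → S → ℝ} {μ₀ : S → ℝ}

lemma tv_comm {X : Type*} [Fintype X] (p q : X → ℝ) : tv p q = tv q p := by
  unfold tv
  congr 1
  exact Finset.sum_congr rfl fun x _ => abs_sub_comm _ _

lemma occ_nonneg (hπ : ∀ s, IsPMF (π s)) (hP : ∀ s a, IsPMF (P s a))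
    (hμ : ∀ s, 0 ≤ μ₀ s) : ∀ (t : ℕ) (sa : S × A), 0 ≤ occ π P μ₀ t sa := by
  intro t
  induction t with
  | zero => intro sa; exact mul_nonneg (hμ _) ((hπ _).1 _)
  | succ t ih =>
    intro sa
    simp only [occ, stepSA]
    refine Finset.sum_nonneg fun s _ => Finset.sum_nonneg fun a _ => ?_
    exact mul_nonneg (mul_nonneg (ih _) ((hP _ _).1 _)) ((hπ _).1 _)

/-- total mass of a pushforward with general (not nec. stochastic) kernel K. -/
lemma stepSA_sum' (hπ : ∀ s, IsPMF (π s)) (K : S → A → S → ℝ) (μ : S × A → ℝ) :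
    ∑ sa : S × A, stepSA π K μ sa = ∑ sa : S × A, μ sa * ∑ s' : S, K sa.1 sa.2 s' := by
  unfold stepSA
  rw [Fintype.sum_prod_type]
  calc ∑ s' : S, ∑ a' : A, ∑ s : S, ∑ a : A, μ (s, a) * K s a s' * π s' a'
      = ∑ s' : S, ∑ s : S, ∑ a : A, μ (s, a) * K s a s' := by
        refine Finset.sum_congr rfl fun s' _ => ?_
        calc ∑ a' : A, ∑ s : S, ∑ a : A, μ (s, a) * K s a s' * π s' a'
            = ∑ a' : A, (∑ s : S, ∑ a : A, μ (s, a) * K s a s') * π s' a' := by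
              refine Finset.sum_congr rfl fun a' _ => ?_
              rw [Finset.sum_mul]
              refine Finset.sum_congr rfl fun s _ => ?_
              rw [Finset.sum_mul]
          _ = (∑ s : S, ∑ a : A, μ (s, a) * K s a s') * ∑ a' : A, π s' a' := by
              rw [← Finset.mul_sum]
          _ = ∑ s : S, ∑ a : A, μ (s, a) * K s a s' := by rw [(hπ s').2, mul_one]
    _ = ∑ s : S, ∑ a : A, ∑ s' : S, μ (s, a) * K s a s' := by
        rw [Finset.sum_comm]
        refine Finset.sum_congr rfl fun s _ => ?_
        rw [Finset.sum_comm]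
    _ = ∑ sa : S × A, μ sa * ∑ s' : S, K sa.1 sa.2 s' := by
        rw [Fintype.sum_prod_type]
        exact Finset.sum_congr rfl fun s _ => Finset.sum_congr rfl fun a _ =>
          (Finset.mul_sum _ _ _).symm

lemma stepSA_sum (hπ : ∀ s, IsPMF (π s)) (hP : ∀ s a, IsPMF (P s a)) (μ : S × A → ℝ) :
    ∑ sa : S × A, stepSA π P μ sa = ∑ sa : S × A, μ sa := by
  rw [stepSA_sum' hπ P μ]
  exact Finset.sum_congr rfl fun sa _ => by rw [(hP sa.1 sa.2).2, mul_one]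

lemma occ_sum (hπ : ∀ s, IsPMF (π s)) (hP : ∀ s a, IsPMF (P s a)) (t : ℕ) :
    ∑ sa : S × A, occ π P μ₀ t sa = ∑ s, μ₀ s := by
  induction t with
  | zero =>
    simp only [occ]
    rw [Fintype.sum_prod_type]
    refine Finset.sum_congr rfl fun s _ => ?_
    dsimp only
    rw [← Finset.mul_sum, (hπ s).2, mul_one]
  | succ t ih =>
    simp only [occ]
    rw [stepSA_sum hπ hP, ih]

lemma occ_le_one (hπ : ∀ s, IsPMF (π s)) (hP : ∀ s a, IsPMF (P s a))
    (hμ : IsPMF μ₀) (t : ℕ) (sa : S × A) : occ π P μ₀ t sa ≤ 1 := by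
  have h1 : occ π P μ₀ t sa ≤ ∑ sa' : S × A, occ π P μ₀ t sa' :=
    Finset.single_le_sum (fun sa' _ => occ_nonneg hπ hP hμ.1 t sa') (Finset.mem_univ sa)
  rw [occ_sum hπ hP, hμ.2] at h1
  exact h1

end Aux

section Aux2
set_option linter.unusedSectionVars false

variable {S A : Type*} [Fintype S] [Fintype A] [DecidableEq S]
variable {π : S → A → ℝ} {P Q : S → A → S → ℝ} {μ₀ : S → ℝ}

lemma stepSA_abs_le (hπ : ∀ s, IsPMF (π s)) (hP : ∀ s a, IsPMF (P s a)) (μ : S × A → ℝ)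
    (sa : S × A) : |stepSA π P μ sa| ≤ stepSA π P (fun x => |μ x|) sa := by
  unfold stepSA
  refine (Finset.abs_sum_le_sum_abs _ _).trans ?_
  refine Finset.sum_le_sum fun s _ => ?_
  refine (Finset.abs_sum_le_sum_abs _ _).trans ?_
  refine Finset.sum_le_sum fun a _ => ?_
  rw [abs_mul, abs_mul, abs_of_nonneg ((hP _ _).1 _), abs_of_nonneg ((hπ _).1 _)]

lemma stepSA_l1_le (hπ : ∀ s, IsPMF (π s)) (hP : ∀ s a, IsPMF (P s a)) (μ : S × A → ℝ) :
    ∑ sa : S × A, |stepSA π P μ sa| ≤ ∑ sa : S × A, |μ sa| := by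
  calc ∑ sa : S × A, |stepSA π P μ sa|
      ≤ ∑ sa : S × A, stepSA π P (fun x => |μ x|) sa :=
        Finset.sum_le_sum fun sa _ => stepSA_abs_le hπ hP μ sa
    _ = ∑ sa : S × A, |μ sa| := stepSA_sum hπ hP _

lemma stepSA_sub (μ ν : S × A → ℝ) (sa : S × A) :
    stepSA π P (fun x => μ x - ν x) sa = stepSA π P μ sa - stepSA π P ν sa := by
  unfold stepSA
  rw [← Finset.sum_sub_distrib]
  refine Finset.sum_congr rfl fun s _ => ?_
  rw [← Finset.sum_sub_distrib]
  refine Finset.sum_congr rfl fun a _ => ?_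
  ring

/-- perturbation of the kernel: ℓ¹ bound on the difference of pushforwards. -/
lemma stepSA_diff_l1 (hπ : ∀ s, IsPMF (π s)) (ν : S × A → ℝ) (hν : ∀ sa, 0 ≤ ν sa) :
    ∑ sa : S × A, |stepSA π P ν sa - stepSA π Q ν sa|
      ≤ ∑ sa : S × A, ν sa * (2 * tv (P sa.1 sa.2) (Q sa.1 sa.2)) := by
  have key : ∀ sa : S × A, |stepSA π P ν sa - stepSA π Q ν sa|
      ≤ stepSA π (fun s a s' => |P s a s' - Q s a s'|) ν sa := by
    intro sa
    unfold stepSA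
    rw [← Finset.sum_sub_distrib]
    refine (Finset.abs_sum_le_sum_abs _ _).trans ?_
    refine Finset.sum_le_sum fun s _ => ?_
    rw [← Finset.sum_sub_distrib]
    refine (Finset.abs_sum_le_sum_abs _ _).trans ?_
    refine Finset.sum_le_sum fun a _ => ?_
    have : ν (s, a) * P s a sa.1 * π sa.1 sa.2 - ν (s, a) * Q s a sa.1 * π sa.1 sa.2
        = ν (s, a) * (P s a sa.1 - Q s a sa.1) * π sa.1 sa.2 := by ring
    rw [this, abs_mul, abs_mul, abs_of_nonneg (hν _), abs_of_nonneg ((hπ _).1 _)]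
  calc ∑ sa : S × A, |stepSA π P ν sa - stepSA π Q ν sa|
      ≤ ∑ sa : S × A, stepSA π (fun s a s' => |P s a s' - Q s a s'|) ν sa :=
        Finset.sum_le_sum fun sa _ => key sa
    _ = ∑ sa : S × A, ν sa * ∑ s' : S, |P sa.1 sa.2 s' - Q sa.1 sa.2 s'| :=
        stepSA_sum' hπ _ ν
    _ = ∑ sa : S × A, ν sa * (2 * tv (P sa.1 sa.2) (Q sa.1 sa.2)) := by
        refine Finset.sum_congr rfl fun sa _ => ?_
        unfold tv; ring

/-- cumulative ℓ¹ error between occupancy measures of two kernels. -/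
lemma occ_diff_l1 (hπ : ∀ s, IsPMF (π s)) (hP : ∀ s a, IsPMF (P s a))
    (hQ : ∀ s a, IsPMF (Q s a)) (hμ : ∀ s, 0 ≤ μ₀ s)
    (g : S → A → ℝ) (hg : ∀ s a, 2 * tv (P s a) (Q s a) ≤ g s a) :
    ∀ t : ℕ, ∑ sa : S × A, |occ π P μ₀ t sa - occ π Q μ₀ t sa|
      ≤ ∑ u ∈ Finset.range t, ∑ sa : S × A, occ π Q μ₀ u sa * g sa.1 sa.2 := by
  intro t
  induction t with
  | zero => simp [occ]
  | succ t ih =>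
    have hocc : ∀ sa, 0 ≤ occ π Q μ₀ t sa := occ_nonneg hπ hQ hμ t
    calc ∑ sa : S × A, |occ π P μ₀ (t+1) sa - occ π Q μ₀ (t+1) sa|
        = ∑ sa : S × A, |stepSA π P (fun x => occ π P μ₀ t x - occ π Q μ₀ t x) sa
            + (stepSA π P (occ π Q μ₀ t) sa - stepSA π Q (occ π Q μ₀ t) sa)| := by
          refine Finset.sum_congr rfl fun sa _ => ?_
          rw [stepSA_sub]
          show |occ π P μ₀ (t+1) sa - occ π Q μ₀ (t+1) sa| = _
          simp only [occ]
          ring_nf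
      _ ≤ ∑ sa : S × A, (|stepSA π P (fun x => occ π P μ₀ t x - occ π Q μ₀ t x) sa|
            + |stepSA π P (occ π Q μ₀ t) sa - stepSA π Q (occ π Q μ₀ t) sa|) :=
          Finset.sum_le_sum fun sa _ => abs_add_le _ _
      _ = (∑ sa : S × A, |stepSA π P (fun x => occ π P μ₀ t x - occ π Q μ₀ t x) sa|)
            + ∑ sa : S × A, |stepSA π P (occ π Q μ₀ t) sa - stepSA π Q (occ π Q μ₀ t) sa| :=
          Finset.sum_add_distrib
      _ ≤ (∑ sa : S × A, |occ π P μ₀ t sa - occ π Q μ₀ t sa|)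
            + ∑ sa : S × A, occ π Q μ₀ t sa * g sa.1 sa.2 := by
          refine add_le_add ((stepSA_l1_le hπ hP _).trans (le_of_eq rfl)) ?_
          refine (stepSA_diff_l1 hπ _ hocc).trans ?_
          refine Finset.sum_le_sum fun sa _ => ?_
          exact mul_le_mul_of_nonneg_left (hg sa.1 sa.2) (hocc sa)
      _ ≤ (∑ u ∈ Finset.range t, ∑ sa : S × A, occ π Q μ₀ u sa * g sa.1 sa.2)
            + ∑ sa : S × A, occ π Q μ₀ t sa * g sa.1 sa.2 := by
          exact add_le_add_left ih _
      _ = ∑ u ∈ Finset.range (t+1), ∑ sa : S × A, occ π Q μ₀ u sa * g sa.1 sa.2 :=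
          (Finset.sum_range_succ _ _).symm

end Aux2

section Aux3
set_option linter.unusedSectionVars false

variable {S A : Type*} [Fintype S] [Fintype A] [DecidableEq S]
variable {π : S → A → ℝ} {P Q : S → A → S → ℝ} {μ₀ d₀ : S → ℝ} {γ : ℝ}

/-- linearity of the occupancy in the initial distribution. -/
lemma occ_linear (π : S → A → ℝ) (P : S → A → S → ℝ) (μ₀ : S → ℝ) :
    ∀ (t : ℕ) (sa : S × A), occ π P μ₀ t sa
      = ∑ s₀ : S, μ₀ s₀ * occ π P (fun s' => if s' = s₀ then (1 : ℝ) else 0) t sa := by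
  intro t
  induction t with
  | zero =>
    intro sa
    simp only [occ]
    rw [Finset.sum_eq_single sa.1]
    · simp
    · intro b _ hb
      simp [Ne.symm hb]
    · simp
  | succ t ih =>
    intro sa
    show stepSA π P (occ π P μ₀ t) sa = _
    unfold stepSA
    calc ∑ s : S, ∑ a : A, occ π P μ₀ t (s, a) * P s a sa.1 * π sa.1 sa.2
        = ∑ s : S, ∑ a : A, ∑ s₀ : S,
            μ₀ s₀ * (occ π P (fun s' => if s' = s₀ then (1:ℝ) else 0) t (s, a)
              * P s a sa.1 * π sa.1 sa.2) := by
          refine Finset.sum_congr rfl fun s _ => Finset.sum_congr rfl fun a _ => ?_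
          rw [ih (s, a), Finset.sum_mul, Finset.sum_mul]
          refine Finset.sum_congr rfl fun s₀ _ => ?_
          ring
      _ = ∑ s₀ : S, ∑ s : S, ∑ a : A,
            μ₀ s₀ * (occ π P (fun s' => if s' = s₀ then (1:ℝ) else 0) t (s, a)
              * P s a sa.1 * π sa.1 sa.2) := by
          calc ∑ s : S, ∑ a : A, ∑ s₀ : S,
                μ₀ s₀ * (occ π P (fun s' => if s' = s₀ then (1:ℝ) else 0) t (s, a)
                  * P s a sa.1 * π sa.1 sa.2)
              = ∑ s : S, ∑ s₀ : S, ∑ a : A,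
                μ₀ s₀ * (occ π P (fun s' => if s' = s₀ then (1:ℝ) else 0) t (s, a)
                  * P s a sa.1 * π sa.1 sa.2) :=
                Finset.sum_congr rfl fun s _ => Finset.sum_comm
            _ = ∑ s₀ : S, ∑ s : S, ∑ a : A,
                μ₀ s₀ * (occ π P (fun s' => if s' = s₀ then (1:ℝ) else 0) t (s, a)
                  * P s a sa.1 * π sa.1 sa.2) := Finset.sum_comm
      _ = ∑ s₀ : S, μ₀ s₀ * occ π P (fun s' => if s' = s₀ then (1:ℝ) else 0) (t+1) sa := by
          refine Finset.sum_congr rfl fun s₀ _ => ?_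
          show _ = μ₀ s₀ * stepSA π P _ sa
          unfold stepSA
          rw [Finset.mul_sum]
          refine Finset.sum_congr rfl fun s _ => ?_
          rw [Finset.mul_sum]

lemma delta_pmf (s : S) : IsPMF (fun s' => if s' = s then (1 : ℝ) else 0) :=
  ⟨fun x => by by_cases h : x = s <;> simp [h], by simp⟩

/-- discounted expected cumulative value of `f` along the occupancy flow. -/
noncomputable def EV (π : S → A → ℝ) (P : S → A → S → ℝ) (μ₀ : S → ℝ) (γ : ℝ)
    (f : S → A → ℝ) : ℝ :=
  ∑' t : ℕ, γ ^ t * ∑ sa : S × A, occ π P μ₀ t sa * f sa.1 sa.2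

lemma inner_abs_le (hπ : ∀ s, IsPMF (π s)) (hP : ∀ s a, IsPMF (P s a)) (hμ : IsPMF μ₀)
    {f : S → A → ℝ} {B : ℝ} (hf : ∀ s a, |f s a| ≤ B) (t : ℕ) :
    |∑ sa : S × A, occ π P μ₀ t sa * f sa.1 sa.2| ≤ B := by
  refine (Finset.abs_sum_le_sum_abs _ _).trans ?_
  calc ∑ sa : S × A, |occ π P μ₀ t sa * f sa.1 sa.2|
      ≤ ∑ sa : S × A, occ π P μ₀ t sa * B := by
        refine Finset.sum_le_sum fun sa _ => ?_
        rw [abs_mul, abs_of_nonneg (occ_nonneg hπ hP hμ.1 t sa)]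
        exact mul_le_mul_of_nonneg_left (hf _ _) (occ_nonneg hπ hP hμ.1 t sa)
    _ = B := by rw [← Finset.sum_mul, occ_sum hπ hP, hμ.2, one_mul]

lemma ev_summable (hπ : ∀ s, IsPMF (π s)) (hP : ∀ s a, IsPMF (P s a)) (hμ : IsPMF μ₀)
    {f : S → A → ℝ} {B : ℝ} (hf : ∀ s a, |f s a| ≤ B) (hγ0 : 0 ≤ γ) (hγ1 : γ < 1) :
    Summable (fun t : ℕ => γ ^ t * ∑ sa : S × A, occ π P μ₀ t sa * f sa.1 sa.2) := by
  refine Summable.of_norm_bounded (g := fun t => B * γ ^ t)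
    ((summable_geometric_of_lt_one hγ0 hγ1).mul_left B) fun t => ?_
  rw [Real.norm_eq_abs, abs_mul, abs_pow, abs_of_nonneg hγ0, mul_comm]
  exact mul_le_mul_of_nonneg_right (inner_abs_le hπ hP hμ hf t) (pow_nonneg hγ0 t)

lemma expReturn_eq_EV (hπ : ∀ s, IsPMF (π s)) (hP : ∀ s a, IsPMF (P s a)) (hd : IsPMF d₀)
    {r : S → A → ℝ} {B : ℝ} (hr : ∀ s a, |r s a| ≤ B) (hγ0 : 0 ≤ γ) (hγ1 : γ < 1) :
    expReturn π P r γ d₀ = EV π P d₀ γ r := by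
  unfold expReturn valueFn EV
  have hsum : ∀ s : S, Summable (fun t : ℕ => d₀ s * (γ ^ t *
      ∑ sa : S × A, occ π P (fun s' => if s' = s then (1:ℝ) else 0) t sa * r sa.1 sa.2)) :=
    fun s => (ev_summable hπ hP (delta_pmf s) hr hγ0 hγ1).mul_left (d₀ s)
  calc ∑ s : S, d₀ s * ∑' t : ℕ, γ ^ t *
        ∑ sa : S × A, occ π P (fun s' => if s' = s then (1:ℝ) else 0) t sa * r sa.1 sa.2
      = ∑ s : S, ∑' t : ℕ, d₀ s * (γ ^ t *
          ∑ sa : S × A, occ π P (fun s' => if s' = s then (1:ℝ) else 0) t sa * r sa.1 sa.2) := by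
        refine Finset.sum_congr rfl fun s _ => ?_
        rw [tsum_mul_left]
    _ = ∑' t : ℕ, ∑ s : S, d₀ s * (γ ^ t *
          ∑ sa : S × A, occ π P (fun s' => if s' = s then (1:ℝ) else 0) t sa * r sa.1 sa.2) :=
        (Summable.tsum_finsetSum fun s _ => hsum s).symm
    _ = ∑' t : ℕ, γ ^ t * ∑ sa : S × A, occ π P d₀ t sa * r sa.1 sa.2 := by
        refine tsum_congr fun t => ?_
        have h1 : ∑ sa : S × A, occ π P d₀ t sa * r sa.1 sa.2
            = ∑ s : S, d₀ s * ∑ sa : S × A,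
                occ π P (fun s' => if s' = s then (1:ℝ) else 0) t sa * r sa.1 sa.2 := by
          calc ∑ sa : S × A, occ π P d₀ t sa * r sa.1 sa.2
              = ∑ sa : S × A, ∑ s : S, d₀ s *
                  (occ π P (fun s' => if s' = s then (1:ℝ) else 0) t sa * r sa.1 sa.2) := by
                refine Finset.sum_congr rfl fun sa _ => ?_
                rw [occ_linear π P d₀ t sa, Finset.sum_mul]
                exact Finset.sum_congr rfl fun s _ => by ring
            _ = ∑ s : S, ∑ sa : S × A, d₀ s *
                  (occ π P (fun s' => if s' = s then (1:ℝ) else 0) t sa * r sa.1 sa.2) :=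
                Finset.sum_comm
            _ = ∑ s : S, d₀ s * ∑ sa : S × A,
                  occ π P (fun s' => if s' = s then (1:ℝ) else 0) t sa * r sa.1 sa.2 :=
                Finset.sum_congr rfl fun s _ => (Finset.mul_sum _ _ _).symm
        rw [h1, Finset.mul_sum]
        refine Finset.sum_congr rfl fun s _ => ?_
        ring

end Aux3

section Aux4
set_option linter.unusedSectionVars false

variable {S A : Type*} [Fintype S] [Fintype A] [DecidableEq S]
variable {π : S → A → ℝ} {P Q : S → A → S → ℝ} {d₀ : S → ℝ} {γ : ℝ}

lemma EV_sub (hπ : ∀ s, IsPMF (π s)) (hP : ∀ s a, IsPMF (P s a)) (hd : IsPMF d₀)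
    {f g : S → A → ℝ} {Bf Bg c : ℝ} (hf : ∀ s a, |f s a| ≤ Bf) (hg : ∀ s a, |g s a| ≤ Bg)
    (hγ0 : 0 ≤ γ) (hγ1 : γ < 1) :
    EV π P d₀ γ (fun s a => f s a - c * g s a)
      = EV π P d₀ γ f - c * EV π P d₀ γ g := by
  unfold EV
  have h1 : ∀ t : ℕ, γ ^ t * ∑ sa : S × A, occ π P d₀ t sa * (f sa.1 sa.2 - c * g sa.1 sa.2)
      = γ ^ t * (∑ sa : S × A, occ π P d₀ t sa * f sa.1 sa.2)
        - c * (γ ^ t * ∑ sa : S × A, occ π P d₀ t sa * g sa.1 sa.2) := by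
    intro t
    have : ∑ sa : S × A, occ π P d₀ t sa * (f sa.1 sa.2 - c * g sa.1 sa.2)
        = (∑ sa : S × A, occ π P d₀ t sa * f sa.1 sa.2)
          - c * ∑ sa : S × A, occ π P d₀ t sa * g sa.1 sa.2 := by
      rw [Finset.mul_sum, ← Finset.sum_sub_distrib]
      refine Finset.sum_congr rfl fun sa _ => ?_
      ring
    rw [this]; ring
  rw [tsum_congr h1,
    Summable.tsum_sub (ev_summable hπ hP hd hf hγ0 hγ1)
      ((ev_summable hπ hP hd hg hγ0 hγ1).mul_left c),
    tsum_mul_left]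

lemma visit_exp (hπ : ∀ s, IsPMF (π s)) (hP : ∀ s a, IsPMF (P s a)) (hd : IsPMF d₀)
    {g : S → A → ℝ} {B : ℝ} (hg : ∀ s a, |g s a| ≤ B) (hγ0 : 0 ≤ γ) (hγ1 : γ < 1) :
    ∑ sa : S × A, visit π P d₀ γ sa * g sa.1 sa.2 = (1 - γ) * EV π P d₀ γ g := by
  unfold visit EV
  have hocc01 : ∀ (t : ℕ) (sa : S × A), |occ π P d₀ t sa| ≤ 1 := fun t sa => by
    rw [abs_of_nonneg (occ_nonneg hπ hP hd.1 t sa)]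
    exact occ_le_one hπ hP hd t sa
  have hsum : ∀ sa : S × A, Summable (fun t : ℕ => γ ^ t * occ π P d₀ t sa * g sa.1 sa.2) := by
    intro sa
    refine Summable.of_norm_bounded (g := fun t => B * γ ^ t)
      ((summable_geometric_of_lt_one hγ0 hγ1).mul_left B) fun t => ?_
    rw [Real.norm_eq_abs, abs_mul, abs_mul, abs_pow, abs_of_nonneg hγ0]
    calc γ ^ t * |occ π P d₀ t sa| * |g sa.1 sa.2|
        = γ ^ t * (|occ π P d₀ t sa| * |g sa.1 sa.2|) := by ring
      _ ≤ γ ^ t * (1 * B) := by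
          refine mul_le_mul_of_nonneg_left ?_ (pow_nonneg hγ0 t)
          exact mul_le_mul (hocc01 t sa) (hg _ _) (abs_nonneg _) zero_le_one
      _ = B * γ ^ t := by ring
  calc ∑ sa : S × A, ((1 - γ) * ∑' t : ℕ, γ ^ t * occ π P d₀ t sa) * g sa.1 sa.2
      = ∑ sa : S × A, (1 - γ) * ∑' t : ℕ, γ ^ t * occ π P d₀ t sa * g sa.1 sa.2 := by
        refine Finset.sum_congr rfl fun sa _ => ?_
        rw [mul_assoc, tsum_mul_right]
    _ = (1 - γ) * ∑ sa : S × A, ∑' t : ℕ, γ ^ t * occ π P d₀ t sa * g sa.1 sa.2 :=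
        (Finset.mul_sum _ _ _).symm
    _ = (1 - γ) * ∑' t : ℕ, ∑ sa : S × A, γ ^ t * occ π P d₀ t sa * g sa.1 sa.2 := by
        rw [Summable.tsum_finsetSum fun sa _ => hsum sa]
    _ = (1 - γ) * ∑' t : ℕ, γ ^ t * ∑ sa : S × A, occ π P d₀ t sa * g sa.1 sa.2 := by
        congr 1
        refine tsum_congr fun t => ?_
        rw [Finset.mul_sum]
        exact Finset.sum_congr rfl fun sa _ => by ring

/-- key geometric-cumulative-sum estimate. -/
lemma tsum_geom_cumul {e D : ℕ → ℝ} {C : ℝ} (he0 : ∀ u, 0 ≤ e u)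
    (heB : Summable (fun u => γ ^ u * e u))
    (hD0 : ∀ t, 0 ≤ D t) (hDC : ∀ t, D t ≤ C)
    (hDe : ∀ t, D t ≤ ∑ u ∈ Finset.range t, e u) (hγ0 : 0 ≤ γ) (hγ1 : γ < 1) :
    ∑' t : ℕ, γ ^ t * D t ≤ (γ / (1 - γ)) * ∑' u : ℕ, γ ^ u * e u := by
  have h1γ : 0 < 1 - γ := by linarith
  have hsumD : Summable (fun t : ℕ => γ ^ t * D t) := by
    refine Summable.of_norm_bounded (g := fun t => C * γ ^ t)
      ((summable_geometric_of_lt_one hγ0 hγ1).mul_left C) fun t => ?_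
    rw [Real.norm_eq_abs, abs_mul, abs_pow, abs_of_nonneg hγ0, abs_of_nonneg (hD0 t), mul_comm]
    exact mul_le_mul_of_nonneg_right (hDC t) (pow_nonneg hγ0 t)
  refine Summable.tsum_le_of_sum_le hsumD fun F => ?_
  obtain ⟨N, hN⟩ := F.exists_nat_subset_range
  calc ∑ t ∈ F, γ ^ t * D t
      ≤ ∑ t ∈ Finset.range N, γ ^ t * D t :=
        Finset.sum_le_sum_of_subset_of_nonneg hN
          fun t _ _ => mul_nonneg (pow_nonneg hγ0 t) (hD0 t)
    _ ≤ ∑ t ∈ Finset.range N, γ ^ t * ∑ u ∈ Finset.range t, e u :=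
        Finset.sum_le_sum fun t _ =>
          mul_le_mul_of_nonneg_left (hDe t) (pow_nonneg hγ0 t)
    _ = ∑ t ∈ Finset.range N, ∑ u ∈ Finset.range N, (if u < t then γ ^ t * e u else 0) := by
        refine Finset.sum_congr rfl fun t ht => ?_
        rw [Finset.mul_sum, ← Finset.sum_filter]
        have hfil : (Finset.range N).filter (fun u => u < t) = Finset.range t := by
          ext u
          simp only [Finset.mem_filter, Finset.mem_range]
          constructor
          · exact fun h => h.2
          · intro h
            exact ⟨lt_trans h (Finset.mem_range.mp ht), h⟩
        rw [hfil]
    _ = ∑ u ∈ Finset.range N, ∑ t ∈ Finset.range N, (if u < t then γ ^ t * e u else 0) :=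
        Finset.sum_comm
    _ ≤ ∑ u ∈ Finset.range N, (γ ^ (u + 1) / (1 - γ)) * e u := by
        refine Finset.sum_le_sum fun u _ => ?_
        have hfac : ∑ t ∈ Finset.range N, (if u < t then γ ^ t * e u else 0)
            = (∑ t ∈ Finset.range N, if u < t then γ ^ t else 0) * e u := by
          rw [Finset.sum_mul]
          refine Finset.sum_congr rfl fun t _ => ?_
          split <;> simp
        rw [hfac]
        refine mul_le_mul_of_nonneg_right ?_ (he0 u)
        rw [← Finset.sum_filter]
        have hfil : (Finset.range N).filter (fun t => u < t) = Finset.Ico (u + 1) N := by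
          ext t
          simp only [Finset.mem_filter, Finset.mem_range, Finset.mem_Ico]
          omega
        rw [hfil]
        by_cases hle : u + 1 ≤ N
        · rw [geom_sum_Ico (ne_of_lt hγ1) hle]
          have heq : (γ ^ N - γ ^ (u + 1)) / (γ - 1) = (γ ^ (u + 1) - γ ^ N) / (1 - γ) := by
            rw [div_eq_div_iff (by linarith : γ - 1 ≠ 0) (ne_of_gt h1γ)]
            ring
          rw [heq]
          refine (div_le_div_iff_of_pos_right h1γ).mpr ?_
          have := pow_nonneg hγ0 N
          linarith
        · rw [Finset.Ico_eq_empty (by omega), Finset.sum_empty]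
          positivity
    _ = (γ / (1 - γ)) * ∑ u ∈ Finset.range N, γ ^ u * e u := by
        rw [Finset.mul_sum]
        refine Finset.sum_congr rfl fun u _ => ?_
        rw [pow_succ]
        ring
    _ ≤ (γ / (1 - γ)) * ∑' u : ℕ, γ ^ u * e u := by
        refine mul_le_mul_of_nonneg_left ?_ (by positivity)
        exact Summable.sum_le_tsum _ (fun u _ => mul_nonneg (pow_nonneg hγ0 u) (he0 u)) heB

end Aux4

section Aux5
set_option maxHeartbeats 1000000
set_option linter.unusedSectionVars false

variable {S A : Type*} [Fintype S] [Fintype A] [DecidableEq S]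
variable {π : S → A → ℝ} {P Q : S → A → S → ℝ} {d₀ : S → ℝ} {γ : ℝ}

/-- simulation lemma: difference in discounted return between two kernels. -/
lemma EV_diff_le (hπ : ∀ s, IsPMF (π s)) (hP : ∀ s a, IsPMF (P s a))
    (hQ : ∀ s a, IsPMF (Q s a)) (hd : IsPMF d₀)
    {r : S → A → ℝ} {Rmax : ℝ} (hr : ∀ s a, |r s a| ≤ Rmax) (hRmax : 0 ≤ Rmax)
    {g : S → A → ℝ} {Bg : ℝ} (hg0 : ∀ s a, 0 ≤ g s a) (hgB : ∀ s a, |g s a| ≤ Bg)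
    (htv : ∀ s a, 2 * tv (P s a) (Q s a) ≤ g s a)
    (hγ0 : 0 ≤ γ) (hγ1 : γ < 1) :
    |EV π P d₀ γ r - EV π Q d₀ γ r| ≤ Rmax * (γ / (1 - γ)) * EV π Q d₀ γ g := by
  set Xp : ℕ → ℝ := fun t => ∑ sa : S × A, occ π P d₀ t sa * r sa.1 sa.2 with hXp
  set Xq : ℕ → ℝ := fun t => ∑ sa : S × A, occ π Q d₀ t sa * r sa.1 sa.2 with hXq
  set D : ℕ → ℝ := fun t => ∑ sa : S × A, |occ π P d₀ t sa - occ π Q d₀ t sa| with hD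
  set E : ℕ → ℝ := fun u => ∑ sa : S × A, occ π Q d₀ u sa * g sa.1 sa.2 with hE
  have hsumP := ev_summable hπ hP hd hr hγ0 hγ1
  have hsumQ := ev_summable hπ hQ hd hr hγ0 hγ1
  have hD0 : ∀ t, 0 ≤ D t := fun t => Finset.sum_nonneg fun sa _ => abs_nonneg _
  have hD2 : ∀ t, D t ≤ 2 := by
    intro t
    calc D t ≤ ∑ sa : S × A, (|occ π P d₀ t sa| + |occ π Q d₀ t sa|) :=
          Finset.sum_le_sum fun sa _ => abs_sub _ _
      _ = (∑ sa : S × A, |occ π P d₀ t sa|) + ∑ sa : S × A, |occ π Q d₀ t sa| :=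
          Finset.sum_add_distrib
      _ = 2 := by
          rw [Finset.sum_congr rfl fun sa _ =>
              abs_of_nonneg (occ_nonneg hπ hP hd.1 t sa),
            Finset.sum_congr rfl fun sa _ =>
              abs_of_nonneg (occ_nonneg hπ hQ hd.1 t sa),
            occ_sum hπ hP, occ_sum hπ hQ, hd.2]
          norm_num
  have hE0 : ∀ u, 0 ≤ E u := fun u => Finset.sum_nonneg fun sa _ =>
    mul_nonneg (occ_nonneg hπ hQ hd.1 u sa) (hg0 _ _)
  have hEsum : Summable (fun u : ℕ => γ ^ u * E u) := ev_summable hπ hQ hd hgB hγ0 hγ1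
  have hDe : ∀ t, D t ≤ ∑ u ∈ Finset.range t, E u := fun t =>
    occ_diff_l1 hπ hP hQ hd.1 g htv t
  have hXpq : ∀ t, |Xp t - Xq t| ≤ Rmax * D t := by
    intro t
    have : Xp t - Xq t
        = ∑ sa : S × A, (occ π P d₀ t sa - occ π Q d₀ t sa) * r sa.1 sa.2 := by
      rw [hXp, hXq, ← Finset.sum_sub_distrib]
      exact Finset.sum_congr rfl fun sa _ => by ring
    rw [this]
    refine (Finset.abs_sum_le_sum_abs _ _).trans ?_
    calc ∑ sa : S × A, |(occ π P d₀ t sa - occ π Q d₀ t sa) * r sa.1 sa.2|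
        ≤ ∑ sa : S × A, |occ π P d₀ t sa - occ π Q d₀ t sa| * Rmax := by
          refine Finset.sum_le_sum fun sa _ => ?_
          rw [abs_mul]
          exact mul_le_mul_of_nonneg_left (hr _ _) (abs_nonneg _)
      _ = Rmax * D t := by rw [← Finset.sum_mul, mul_comm]
  have hdiff : EV π P d₀ γ r - EV π Q d₀ γ r = ∑' t : ℕ, (γ ^ t * Xp t - γ ^ t * Xq t) :=
    (Summable.tsum_sub hsumP hsumQ).symm
  have hsumRD : Summable (fun t : ℕ => γ ^ t * (Rmax * D t)) := by
    refine Summable.of_norm_bounded (g := fun t => (Rmax * 2) * γ ^ t)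
      ((summable_geometric_of_lt_one hγ0 hγ1).mul_left _) fun t => ?_
    rw [Real.norm_eq_abs, abs_mul, abs_pow, abs_of_nonneg hγ0,
      abs_of_nonneg (mul_nonneg hRmax (hD0 t))]
    calc γ ^ t * (Rmax * D t) ≤ γ ^ t * (Rmax * 2) := by
          refine mul_le_mul_of_nonneg_left ?_ (pow_nonneg hγ0 t)
          exact mul_le_mul_of_nonneg_left (hD2 t) hRmax
      _ = Rmax * 2 * γ ^ t := by ring
  calc |EV π P d₀ γ r - EV π Q d₀ γ r|
      ≤ ∑' t : ℕ, |γ ^ t * Xp t - γ ^ t * Xq t| := by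
        rw [hdiff]
        exact (Real.norm_eq_abs _ ▸ norm_tsum_le_tsum_norm
          ((hsumP.sub hsumQ).abs)).trans_eq (tsum_congr fun t => Real.norm_eq_abs _)
    _ ≤ ∑' t : ℕ, γ ^ t * (Rmax * D t) := by
        refine Summable.tsum_le_tsum (fun t => ?_) (hsumP.sub hsumQ).abs hsumRD
        rw [← mul_sub, abs_mul, abs_pow, abs_of_nonneg hγ0]
        exact mul_le_mul_of_nonneg_left (hXpq t) (pow_nonneg hγ0 t)
    _ = Rmax * ∑' t : ℕ, γ ^ t * D t := by
        rw [← tsum_mul_left]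
        exact tsum_congr fun t => by ring
    _ ≤ Rmax * ((γ / (1 - γ)) * ∑' u : ℕ, γ ^ u * E u) := by
        refine mul_le_mul_of_nonneg_left ?_ hRmax
        exact tsum_geom_cumul hE0 hEsum hD0 hD2 hDe hγ0 hγ1
    _ = Rmax * (γ / (1 - γ)) * EV π Q d₀ γ g := by
        rw [EV]
        ring

end Aux5

section Aux6
set_option linter.unusedSectionVars false

variable {S A : Type*} [Fintype S] [Fintype A] [DecidableEq S]
variable {π : S → A → ℝ} {P : S → A → S → ℝ} {d₀ : S → ℝ} {γ : ℝ}

lemma EV_one (hπ : ∀ s, IsPMF (π s)) (hP : ∀ s a, IsPMF (P s a)) (hd : IsPMF d₀)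
    (hγ0 : 0 ≤ γ) (hγ1 : γ < 1) :
    EV π P d₀ γ (fun _ _ => (1 : ℝ)) = (1 - γ)⁻¹ := by
  unfold EV
  have h1 : ∀ t : ℕ, γ ^ t * (∑ sa : S × A, occ π P d₀ t sa * (1:ℝ)) = γ ^ t := by
    intro t
    rw [Finset.sum_congr rfl fun sa _ => mul_one _, occ_sum hπ hP, hd.2, mul_one]
  rw [tsum_congr h1, tsum_geometric_of_lt_one hγ0 hγ1]

lemma visit_sum_one (hπ : ∀ s, IsPMF (π s)) (hP : ∀ s a, IsPMF (P s a)) (hd : IsPMF d₀)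
    (hγ0 : 0 ≤ γ) (hγ1 : γ < 1) :
    ∑ sa : S × A, visit π P d₀ γ sa * (1 : ℝ) = 1 := by
  rw [visit_exp hπ hP hd (g := fun _ _ => (1:ℝ)) (B := 1)
      (fun _ _ => by norm_num) hγ0 hγ1,
    EV_one hπ hP hd hγ0 hγ1]
  exact mul_inv_cancel₀ (by linarith : (1:ℝ) - γ ≠ 0)

end Aux6



/-- behavior-policy performance guarantee: if the behavior
policy `π_β` satisfies `E_{d^{π_β}_{P̂}}[Ĉ] ≤ η`, then the policy `π̂`
maximizing the value of the conservative MDP satisfies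
`V^{π̂}_{M*} ≥ V^{π_β}_{M*} − (4γR_max/(1−γ)²)·η − (4γR_max/(1−γ)²)·ε`. -/
theorem stmt16 {S A : Type*} [Fintype S] [Fintype A] [DecidableEq S]
    (πhat πβ : S → A → ℝ) (Pstar Phat : S → A → S → ℝ) (r : S → A → ℝ)
    (Chat : S → A → ℝ) (d₀ : S → ℝ) (γ Rmax ε η : ℝ)
    (hπhat : ∀ s, IsPMF (πhat s)) (hπβ : ∀ s, IsPMF (πβ s))
    (hPstar : ∀ s a, IsPMF (Pstar s a)) (hPhat : ∀ s a, IsPMF (Phat s a))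
    (hd₀ : IsPMF d₀)
    (hr : ∀ s a, |r s a| ≤ Rmax)
    (hChat0 : ∀ s a, 0 ≤ Chat s a) (hChat1 : ∀ s a, Chat s a ≤ 1)
    (hTV : ∀ s a, tv (Phat s a) (Pstar s a) ≤ Chat s a + ε)
    (hε : 0 ≤ ε) (hη : 0 ≤ η) (hγ0 : 0 ≤ γ) (hγ1 : γ < 1)
    (hβ : ∑ sa : S × A, visit πβ Phat d₀ γ sa * Chat sa.1 sa.2 ≤ η)
    (hmax : ∀ π : S → A → ℝ, (∀ s, IsPMF (π s)) →
      expReturn π Phat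
          (fun s a => r s a - (2 * γ * Rmax / (1 - γ)) * Chat s a) γ d₀ ≤
        expReturn πhat Phat
          (fun s a => r s a - (2 * γ * Rmax / (1 - γ)) * Chat s a) γ d₀) :
    expReturn πhat Pstar r γ d₀ ≥
      expReturn πβ Pstar r γ d₀ -
        (4 * γ * Rmax / (1 - γ) ^ 2) * η -
        (4 * γ * Rmax / (1 - γ) ^ 2) * ε := by
  have h1γ : 0 < 1 - γ := by linarith
  -- nonemptiness and sign of Rmax
  have hS : Nonempty S := by
    by_contra h
    rw [not_nonempty_iff] at h
    have h2 := hd₀.2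
    rw [Finset.univ_eq_empty, Finset.sum_empty] at h2
    norm_num at h2
  obtain ⟨s₀⟩ := hS
  have hA : Nonempty A := by
    by_contra h
    rw [not_nonempty_iff] at h
    have h2 := (hπβ s₀).2
    rw [Finset.univ_eq_empty, Finset.sum_empty] at h2
    norm_num at h2
  obtain ⟨a₀⟩ := hA
  have hRmax : 0 ≤ Rmax := (abs_nonneg _).trans (hr s₀ a₀)
  have hc0 : 0 ≤ 2 * γ * Rmax / (1 - γ) := by
    apply div_nonneg _ h1γ.le
    positivity
  -- the TV-control function
  set g : S → A → ℝ := fun s a => 2 * (Chat s a + ε) with hg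
  have hg0 : ∀ s a, 0 ≤ g s a := fun s a => by
    have := hChat0 s a; simp only [hg]; linarith
  have hgB : ∀ s a, |g s a| ≤ 2 * (1 + ε) := fun s a => by
    rw [abs_of_nonneg (hg0 s a)]
    have := hChat1 s a; simp only [hg]; linarith
  have htv : ∀ s a, 2 * tv (Pstar s a) (Phat s a) ≤ g s a := fun s a => by
    rw [tv_comm]
    have := hTV s a; simp only [hg]; linarith
  have hChatB : ∀ s a, |Chat s a| ≤ 1 := fun s a => by
    rw [abs_of_nonneg (hChat0 s a)]; exact hChat1 s a
  have hrtB : ∀ s a, |r s a - 2 * γ * Rmax / (1 - γ) * Chat s a|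
      ≤ Rmax + 2 * γ * Rmax / (1 - γ) := fun s a => by
    refine (abs_sub _ _).trans ?_
    have h2 : |2 * γ * Rmax / (1 - γ) * Chat s a| ≤ 2 * γ * Rmax / (1 - γ) := by
      rw [abs_mul, abs_of_nonneg hc0]
      calc 2 * γ * Rmax / (1 - γ) * |Chat s a| ≤ 2 * γ * Rmax / (1 - γ) * 1 :=
            mul_le_mul_of_nonneg_left (hChatB s a) hc0
        _ = 2 * γ * Rmax / (1 - γ) := mul_one _
    linarith [hr s a]
  -- abbreviations
  set EPh := EV πhat Pstar d₀ γ r with hEPh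
  set EQh := EV πhat Phat d₀ γ r with hEQh
  set EPβ := EV πβ Pstar d₀ γ r with hEPβ
  set EQβ := EV πβ Phat d₀ γ r with hEQβ
  set Gh := EV πhat Phat d₀ γ g with hGh
  set Gβ := EV πβ Phat d₀ γ g with hGβ
  set Chh := EV πhat Phat d₀ γ Chat with hChh
  set Chβ := EV πβ Phat d₀ γ Chat with hChβ
  set Wh := ∑ sa : S × A, visit πhat Phat d₀ γ sa * Chat sa.1 sa.2 with hWh
  set Wβ := ∑ sa : S × A, visit πβ Phat d₀ γ sa * Chat sa.1 sa.2 with hWβ'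
  -- simulation bounds
  have hsimh := EV_diff_le hπhat hPstar hPhat hd₀ hr hRmax hg0 hgB htv hγ0 hγ1
  have hsimβ := EV_diff_le hπβ hPstar hPhat hd₀ hr hRmax hg0 hgB htv hγ0 hγ1
  have hA1 : EQh - Rmax * (γ / (1 - γ)) * Gh ≤ EPh := by
    have := (abs_le.mp hsimh).1
    linarith
  have hC1 : EPβ - Rmax * (γ / (1 - γ)) * Gβ ≤ EQβ := by
    have := (abs_le.mp hsimβ).2
    linarith
  -- optimality of πhat in the conservative MDP
  have hB1 : EQβ - 2 * γ * Rmax / (1 - γ) * Chβ ≤ EQh - 2 * γ * Rmax / (1 - γ) * Chh := by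
    have h := hmax πβ hπβ
    rw [expReturn_eq_EV hπβ hPhat hd₀ hrtB hγ0 hγ1,
      expReturn_eq_EV hπhat hPhat hd₀ hrtB hγ0 hγ1,
      EV_sub hπβ hPhat hd₀ hr hChatB hγ0 hγ1,
      EV_sub hπhat hPhat hd₀ hr hChatB hγ0 hγ1] at h
    exact h
  -- visitation identities
  have hsplit : ∀ π' : S → A → ℝ,
      ∑ sa : S × A, visit π' Phat d₀ γ sa * g sa.1 sa.2
        = 2 * (∑ sa : S × A, visit π' Phat d₀ γ sa * Chat sa.1 sa.2)
          + 2 * ε * ∑ sa : S × A, visit π' Phat d₀ γ sa * (1:ℝ) := by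
    intro π'
    rw [Finset.mul_sum, Finset.mul_sum, ← Finset.sum_add_distrib]
    refine Finset.sum_congr rfl fun sa _ => ?_
    simp only [hg]
    ring
  have hGh1 : (1 - γ) * Gh = 2 * Wh + 2 * ε := by
    rw [← visit_exp hπhat hPhat hd₀ hgB hγ0 hγ1, hsplit πhat,
      visit_sum_one hπhat hPhat hd₀ hγ0 hγ1, ← hWh]
    ring
  have hGβ1 : (1 - γ) * Gβ = 2 * Wβ + 2 * ε := by
    rw [← visit_exp hπβ hPhat hd₀ hgB hγ0 hγ1, hsplit πβ,
      visit_sum_one hπβ hPhat hd₀ hγ0 hγ1, ← hWβ']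
    ring
  have hChh1 : (1 - γ) * Chh = Wh := by
    rw [← visit_exp hπhat hPhat hd₀ hChatB hγ0 hγ1, hWh]
  have hChβ1 : (1 - γ) * Chβ = Wβ := by
    rw [← visit_exp hπβ hPhat hd₀ hChatB hγ0 hγ1, hWβ']
  -- clear denominators
  have hb2 : (0:ℝ) < (1 - γ) ^ 2 := by positivity
  have fact1 : EQh * (1 - γ) ^ 2 - Rmax * γ * (2 * Wh + 2 * ε) ≤ EPh * (1 - γ) ^ 2 := by
    have m := mul_le_mul_of_nonneg_right hA1 hb2.le
    have e1 : (EQh - Rmax * (γ / (1 - γ)) * Gh) * (1 - γ) ^ 2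
        = EQh * (1 - γ) ^ 2 - Rmax * γ * ((1 - γ) * Gh) := by
      field_simp
    rw [e1, hGh1] at m
    exact m
  have fact3 : EPβ * (1 - γ) ^ 2 - Rmax * γ * (2 * Wβ + 2 * ε) ≤ EQβ * (1 - γ) ^ 2 := by
    have m := mul_le_mul_of_nonneg_right hC1 hb2.le
    have e1 : (EPβ - Rmax * (γ / (1 - γ)) * Gβ) * (1 - γ) ^ 2
        = EPβ * (1 - γ) ^ 2 - Rmax * γ * ((1 - γ) * Gβ) := by
      field_simp
    rw [e1, hGβ1] at m
    exact m
  have fact2 : EQβ * (1 - γ) ^ 2 - 2 * γ * Rmax * Wβ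
      ≤ EQh * (1 - γ) ^ 2 - 2 * γ * Rmax * Wh := by
    have m := mul_le_mul_of_nonneg_right hB1 hb2.le
    have e1 : (EQβ - 2 * γ * Rmax / (1 - γ) * Chβ) * (1 - γ) ^ 2
        = EQβ * (1 - γ) ^ 2 - 2 * γ * Rmax * ((1 - γ) * Chβ) := by
      field_simp
    have e2 : (EQh - 2 * γ * Rmax / (1 - γ) * Chh) * (1 - γ) ^ 2
        = EQh * (1 - γ) ^ 2 - 2 * γ * Rmax * ((1 - γ) * Chh) := by
      field_simp
    rw [e1, e2, hChβ1, hChh1] at m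
    exact m
  have fact4 : γ * Rmax * Wβ ≤ γ * Rmax * η :=
    mul_le_mul_of_nonneg_left hβ (by positivity)
  -- final assembly
  rw [expReturn_eq_EV hπhat hPstar hd₀ hr hγ0 hγ1,
    expReturn_eq_EV hπβ hPstar hd₀ hr hγ0 hγ1, ← hEPh, ← hEPβ, ge_iff_le,
    ← mul_le_mul_iff_of_pos_right hb2]
  have expand : (EPβ - 4 * γ * Rmax / (1 - γ) ^ 2 * η - 4 * γ * Rmax / (1 - γ) ^ 2 * ε)
      * (1 - γ) ^ 2
      = EPβ * (1 - γ) ^ 2 - 4 * γ * Rmax * η - 4 * γ * Rmax * ε := by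
    field_simp
  rw [expand]
  linarith [fact1, fact2, fact3, fact4]
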